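/- arXiv:2305.02267 — 2 statements merged into one kernel-verified Lean document; each statement's English description precedes it below -/
import Mathlib

section
/- Let m be a positive integer, ζ a primitive m-th root of unity, and p, q positive integers coprime to m with pq ≡ 1 (mod m). Then for x ∈ ℂ with x^m ≠ 1, D_ζ(x)^p / D_{ζ^q}(x) = ((1-x^m)^{p-1} · ∏_{t=1}^{p-1} 1/(x;ζ)_{⌊mt/p⌋+1})^m, where (x;ζ)_n = ∏_{i=0}^{n-1} (1 - ζ^i x) and D_ζ(x) = ∏_{t=1}^{m-1}(1-ζ^t x)^t. -/
open Finset

/-- Cyclic quantum dilogarithm: `D_ζ(x) = ∏_{t=1}^{m-1} (1 - ζ^t x)^t`. -/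
noncomputable def cyclicDilog (m : ℕ) (ζ x : ℂ) : ℂ :=
  ∏ t ∈ Finset.Icc 1 (m - 1), (1 - ζ ^ t * x) ^ t

/-- q-Pochhammer symbol `(x;ζ)_n = ∏_{i=0}^{n-1} (1 - ζ^i x)`. -/
noncomputable def qPoch (ζ x : ℂ) (n : ℕ) : ℂ :=
  ∏ i ∈ Finset.range n, (1 - ζ ^ i * x)

/-!
Write `a_s = 1 - ζ^s x`. Multiplication by `q` permutes the nonzero residues mod `m` with inverse
multiplication by `p`, so `D_{ζ^q}(x) = ∏ a_s ^ (ps mod m)`, while `D_ζ(x)^p = ∏ a_s ^ (ps)`.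
Hence the quotient is the `m`-th power of `∏_{s=1}^{m-1} a_s ^ ⌊ps/m⌋`. Counting the lattice
points `(s, t)` with `1 ≤ t ≤ ⌊ps/m⌋` by columns `t` instead (coprimality of `p` and `m` rules out
points on the line `tm = ps`) turns this into `∏_{t=1}^{p-1} ∏_{s=⌊mt/p⌋+1}^{m-1} a_s`, and each
inner product is `(1 - x^m) / (x;ζ)_{⌊mt/p⌋+1}` because `∏_{s=0}^{m-1} a_s = 1 - x^m`.
-/

namespace Nat

theorem mul_mul_mod_of_modEq_one {m p q t : ℕ} (hpq : p * q ≡ 1 [MOD m]) (ht : t < m) :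
    p * (q * t % m) % m = t := by
  have h : p * (q * t % m) ≡ t [MOD m] :=
    calc p * (q * t % m) ≡ p * (q * t) [MOD m] := (Nat.mod_modEq _ _).mul_left p
      _ = p * q * t := (mul_assoc ..).symm
      _ ≡ 1 * t [MOD m] := hpq.mul_right t
      _ = t := one_mul t
  rw [Nat.ModEq, Nat.mod_eq_of_lt ht] at h
  exact h

theorem le_mul_div_iff_mul_div_lt {m p s t : ℕ} (hp : 0 < p) (hpm : p.Coprime m)
    (hs₀ : 0 < s) (hsm : s < m) : t ≤ p * s / m ↔ m * t / p < s := by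
  have hne : t * m ≠ p * s := fun h ↦
    Nat.not_dvd_of_pos_of_lt hs₀ hsm (hpm.symm.dvd_of_dvd_mul_left ⟨t, by rw [← h, mul_comm]⟩)
  rw [Nat.le_div_iff_mul_le (hs₀.trans hsm), Nat.div_lt_iff_lt_mul hp, mul_comm m, mul_comm s]
  exact ⟨fun h ↦ lt_of_le_of_ne h hne, le_of_lt⟩

end Nat

theorem Finset.prod_Icc_mul_mod_eq {M : Type*} [CommMonoid M] {m p q : ℕ}
    (hpq : p * q ≡ 1 [MOD m]) (f : ℕ → ℕ → M) :
    ∏ t ∈ Icc 1 (m - 1), f (q * t % m) t = ∏ s ∈ Icc 1 (m - 1), f s (p * s % m) := by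
  have hqp : q * p ≡ 1 [MOD m] := by rwa [mul_comm]
  have mem {a b : ℕ} (hab : a * b ≡ 1 [MOD m]) {t : ℕ} (ht : t ∈ Icc 1 (m - 1)) :
      b * t % m ∈ Icc 1 (m - 1) := by
    rw [mem_Icc] at ht ⊢
    have hinv := Nat.mul_mul_mod_of_modEq_one hab (t := t) (by omega)
    have hlt := Nat.mod_lt (b * t) (by omega : 0 < m)
    refine ⟨Nat.pos_of_ne_zero fun h0 ↦ ?_, by omega⟩
    rw [h0, mul_zero, Nat.zero_mod] at hinv
    omega
  refine prod_nbij' (fun t ↦ q * t % m) (fun s ↦ p * s % m) (fun t ↦ mem hpq) (fun s ↦ mem hqp)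
    (fun t ht ↦ ?_) (fun s hs ↦ ?_) (fun t ht ↦ ?_)
  · exact Nat.mul_mul_mod_of_modEq_one hpq (by simp only [mem_Icc] at ht; omega)
  · exact Nat.mul_mul_mod_of_modEq_one hqp (by simp only [mem_Icc] at hs; omega)
  · simp only [Nat.mul_mul_mod_of_modEq_one hpq (by simp only [mem_Icc] at ht; omega : t < m)]

theorem Finset.prod_pow_mul_div_eq_prod_prod_Ioo {M : Type*} [CommMonoid M] {m p : ℕ}
    (hp : 0 < p) (hpm : p.Coprime m) (f : ℕ → M) :
    ∏ s ∈ Icc 1 (m - 1), f s ^ (p * s / m) =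
      ∏ t ∈ Icc 1 (p - 1), ∏ s ∈ Ioo (m * t / p) m, f s := by
  have hlattice : ∀ s t, s ∈ Icc 1 (m - 1) ∧ t ∈ Icc 1 (p * s / m) ↔
      s ∈ Ioo (m * t / p) m ∧ t ∈ Icc 1 (p - 1) := by
    intro s t
    simp only [mem_Icc, mem_Ioo]
    constructor
    · rintro ⟨hs, ht₁, ht₂⟩
      have hts : m * t / p < s :=
        (Nat.le_mul_div_iff_mul_div_lt hp hpm (by omega) (by omega)).1 ht₂
      have htp : t < p := by
        have : m * t < m * p := (Nat.div_lt_iff_lt_mul hp).1 (by omega)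
        exact Nat.lt_of_mul_lt_mul_left this
      omega
    · rintro ⟨⟨hts, hsm⟩, ht⟩
      have hs₀ : 0 < s := (Nat.zero_le _).trans_lt hts
      exact ⟨⟨hs₀, by omega⟩, ht.1, (Nat.le_mul_div_iff_mul_div_lt hp hpm hs₀ hsm).2 hts⟩
  calc ∏ s ∈ Icc 1 (m - 1), f s ^ (p * s / m)
      = ∏ s ∈ Icc 1 (m - 1), ∏ _t ∈ Icc 1 (p * s / m), f s := by simp
    _ = ∏ t ∈ Icc 1 (p - 1), ∏ s ∈ Ioo (m * t / p) m, f s := prod_comm' hlattice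

theorem pow_div_pow_mod {G₀ : Type*} [GroupWithZero G₀] {a : G₀} (ha : a ≠ 0) (n m : ℕ) :
    a ^ n / a ^ (n % m) = (a ^ (n / m)) ^ m := by
  rw [div_eq_mul_inv, ← pow_sub₀ a ha (Nat.mod_le n m), ← pow_mul,
    Nat.sub_eq_of_eq_add (Nat.div_add_mod' n m).symm]

section

variable {m : ℕ} {ζ : ℂ}

theorem one_sub_pow_mul_ne_zero (hζ : ζ ^ m = 1) {x : ℂ} (hx : x ^ m ≠ 1) (s : ℕ) :
    1 - ζ ^ s * x ≠ 0 := by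
  intro h
  apply hx
  calc x ^ m = (ζ ^ s * x) ^ m := by
        rw [mul_pow, ← pow_mul, mul_comm s, pow_mul, hζ, one_pow, one_mul]
    _ = 1 := by rw [← sub_eq_zero.1 h, one_pow]

theorem qPoch_ne_zero (hζ : ζ ^ m = 1) {x : ℂ} (hx : x ^ m ≠ 1) (n : ℕ) : qPoch ζ x n ≠ 0 :=
  prod_ne_zero_iff.2 fun s _ ↦ one_sub_pow_mul_ne_zero hζ hx s

theorem IsPrimitiveRoot.qPoch_self (hm : 0 < m) (hζ : IsPrimitiveRoot ζ m) (x : ℂ) :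
    qPoch ζ x m = 1 - x ^ m := by
  have h := congrArg (Polynomial.eval 1) (X_pow_sub_C_eq_prod hζ hm (rfl : x ^ m = x ^ m))
  simpa [Polynomial.eval_prod, qPoch] using h.symm

theorem IsPrimitiveRoot.prod_Ioo_one_sub_pow_mul (hm : 0 < m) (hζ : IsPrimitiveRoot ζ m)
    {x : ℂ} (hx : x ^ m ≠ 1) {k : ℕ} (hk : k < m) :
    ∏ s ∈ Ioo k m, (1 - ζ ^ s * x) = (1 - x ^ m) * (qPoch ζ x (k + 1))⁻¹ := by
  rw [eq_mul_inv_iff_mul_eq₀ (qPoch_ne_zero hζ.pow_eq_one hx _), ← hζ.qPoch_self hm, mul_comm,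
    qPoch, qPoch, ← Finset.Ico_succ_left_eq_Ioo, Order.succ_eq_add_one]
  exact prod_range_mul_prod_Ico _ hk

theorem cyclicDilog_pow_eq_prod (ζ x : ℂ) (p : ℕ) :
    cyclicDilog m ζ x ^ p = ∏ s ∈ Icc 1 (m - 1), (1 - ζ ^ s * x) ^ (p * s) := by
  simp only [cyclicDilog, ← prod_pow, ← pow_mul, mul_comm]

theorem cyclicDilog_zeta_pow_eq_prod {p q : ℕ} (hζ : ζ ^ m = 1) (hpq : p * q ≡ 1 [MOD m])
    (x : ℂ) :
    cyclicDilog m (ζ ^ q) x = ∏ s ∈ Icc 1 (m - 1), (1 - ζ ^ s * x) ^ (p * s % m) := by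
  rw [cyclicDilog, ← prod_Icc_mul_mod_eq hpq fun s t ↦ (1 - ζ ^ s * x) ^ t]
  simp only [← pow_mul, ← pow_eq_pow_mod _ hζ]

end

theorem cyclicDilog_change_of_zeta_general (m p q : ℕ) (hm : 0 < m) (hp : 0 < p)
    (hpm : Nat.Coprime p m) (hpq : p * q ≡ 1 [MOD m])
    (ζ : ℂ) (hζ : IsPrimitiveRoot ζ m) (x : ℂ) (hx : x ^ m ≠ 1) :
    cyclicDilog m ζ x ^ p / cyclicDilog m (ζ ^ q) x =
    ((1 - x ^ m) ^ (p - 1) *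
      ∏ t ∈ Finset.Icc 1 (p - 1), (qPoch ζ x (m * t / p + 1))⁻¹) ^ m := by
  have hfloor : cyclicDilog m ζ x ^ p / cyclicDilog m (ζ ^ q) x =
      (∏ s ∈ Icc 1 (m - 1), (1 - ζ ^ s * x) ^ (p * s / m)) ^ m := by
    rw [cyclicDilog_pow_eq_prod, cyclicDilog_zeta_pow_eq_prod hζ.pow_eq_one hpq,
      ← prod_div_distrib, ← prod_pow]
    exact prod_congr rfl fun s _ ↦ pow_div_pow_mod (one_sub_pow_mul_ne_zero hζ.pow_eq_one hx s) _ _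
  have htail : ∀ t ∈ Icc 1 (p - 1), ∏ s ∈ Ioo (m * t / p) m, (1 - ζ ^ s * x) =
      (1 - x ^ m) * (qPoch ζ x (m * t / p + 1))⁻¹ := by
    intro t ht
    refine hζ.prod_Ioo_one_sub_pow_mul hm hx ((Nat.div_lt_iff_lt_mul hp).2 ?_)
    exact Nat.mul_lt_mul_of_pos_left (by simp only [mem_Icc] at ht; omega) hm
  rw [hfloor, prod_pow_mul_div_eq_prod_prod_Ioo hp hpm, prod_congr rfl htail, prod_mul_distrib,
    prod_const, Nat.card_Icc, Nat.add_sub_cancel]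

theorem cyclicDilog_change_of_zeta (m p q : ℕ) (hm : 0 < m) (hp : 0 < p) (hq : 0 < q)
    (hpm : Nat.Coprime p m) (hqm : Nat.Coprime q m) (hpq : p * q ≡ 1 [MOD m])
    (ζ : ℂ) (hζ : IsPrimitiveRoot ζ m) (x : ℂ) (hx : x ^ m ≠ 1) :
    cyclicDilog m ζ x ^ p / cyclicDilog m (ζ ^ q) x =
    ((1 - x ^ m) ^ (p - 1) *
      ∏ t ∈ Finset.Icc 1 (p - 1), (qPoch ζ x (m * t / p + 1))⁻¹) ^ m :=
  cyclicDilog_change_of_zeta_general m p q hm hp hpm hpq ζ hζ x hx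
end

section
/- Specializing the two-variable identity at x=1: ∑_{n₁,n₂ ≥ 0} q^{(3n₁²-n₁)/2 + 4n₁n₂ + 4n₂²} / ((q;q)_{n₁}(q²;q²)_{n₂}) = ∑_{n≥0} q^{n²}/(q;q)_n, as formal power series in q. -/
/-!
Write the exponent as `(m + 2j)² + (m choose 2)` and group the terms by `n = m + 2j`. The inner
sum is then `q^{n²}` times the coefficient of `zⁿ` in `E_q(z) · e_{q²}(z²)`, the expansion of
`(-z;q)_∞ / (z²;q²)_∞ = 1 / (z;q)_∞ = e_q(z)`, so it equals `q^{n²} / (q;q)ₙ`. Without infinite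
products: `E_q(z) = (1 + z) E_q(qz)` and `e_{q²}(z²)(1 - z²) = e_{q²}(q²z²)` give
`G(z)(1 - z) = G(qz)` for the product `G`, and this functional equation determines `G = e_q`.
-/

open Finset

/-- `(q;q)_n = ∏_{i=1}^n (1 - q^i)`. -/
noncomputable def qFac (q : ℂ) (n : ℕ) : ℂ :=
  ∏ i ∈ Finset.range n, (1 - q ^ (i + 1))

open PowerSeries

theorem Summable.tsum_eq_tsum_sum_antidiagonal {α A : Type*} [AddCommMonoid α]
    [TopologicalSpace α] [ContinuousAdd α] [T3Space α] [AddCommMonoid A] [HasAntidiagonal A]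
    {f : A × A → α} (hf : Summable f) : ∑' p, f p = ∑' n, ∑ p ∈ antidiagonal n, f p := by
  rw [← HasAntidiagonal.sigmaAntidiagonalEquivProd.tsum_eq f]
  refine ((HasAntidiagonal.sigmaAntidiagonalEquivProd.summable_iff.2 hf).tsum_sigma'
      fun n => (hasSum_fintype _).summable).trans ?_
  exact tsum_congr fun n => (tsum_fintype _).trans (sum_finset_coe _ _)

lemma summable_pow_sq_div_pow {r s : ℝ} (hr0 : 0 ≤ r) (hr1 : r < 1) (hs : 0 < s) :
    Summable fun n : ℕ => r ^ (n ^ 2) / s ^ n := by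
  have hlim : Filter.Tendsto (fun n : ℕ => r ^ n / s) Filter.atTop (nhds 0) := by
    simpa using (tendsto_pow_atTop_nhds_zero_of_lt_one hr0 hr1).div_const s
  refine summable_geometric_two.of_norm_bounded_eventually_nat ?_
  filter_upwards [hlim.eventually (ge_mem_nhds (by norm_num : (0 : ℝ) < 1 / 2))] with n hn
  rw [Real.norm_of_nonneg (by positivity), sq, pow_mul, ← div_pow]
  exact pow_le_pow_left₀ (by positivity) hn n

lemma summable_pow_sq_mul_coeff_mul_coeff {q : ℂ} (hq : ‖q‖ < 1) {f g : ℂ⟦X⟧} {s : ℝ}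
    (hs : 0 < s) (hf : ∀ n, ‖coeff n f‖ ≤ 1 / s ^ n) (hg : ∀ n, ‖coeff n g‖ ≤ 1 / s ^ n) :
    Summable fun p : ℕ × ℕ => q ^ ((p.1 + p.2) ^ 2) * (coeff p.1 f * coeff p.2 g) := by
  have hu := summable_pow_sq_div_pow (norm_nonneg q) hq hs
  refine (hu.mul_of_nonneg hu (fun _ => by positivity) fun _ => by positivity).of_norm_bounded
    fun ⟨m, k⟩ => ?_
  have hpow : ‖q‖ ^ ((m + k) ^ 2) ≤ ‖q‖ ^ (m ^ 2) * ‖q‖ ^ (k ^ 2) := by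
    rw [← pow_add]
    exact pow_le_pow_of_le_one (norm_nonneg q) hq.le
      (by rw [add_sq]; exact Nat.add_le_add_right (Nat.le_add_right _ _) _)
  calc ‖q ^ ((m + k) ^ 2) * (coeff m f * coeff k g)‖
      = ‖q‖ ^ ((m + k) ^ 2) * (‖coeff m f‖ * ‖coeff k g‖) := by rw [norm_mul, norm_mul, norm_pow]
    _ ≤ (‖q‖ ^ (m ^ 2) * ‖q‖ ^ (k ^ 2)) * (1 / s ^ m * (1 / s ^ k)) := by
      gcongr
      exacts [hf m, hg k]
    _ = ‖q‖ ^ (m ^ 2) / s ^ m * (‖q‖ ^ (k ^ 2) / s ^ k) := by ring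

lemma pentagonal_add_eq_sq_add_choose_two (m j : ℕ) :
    (3 * m ^ 2 - m) / 2 + 4 * m * j + 4 * j ^ 2 = (m + 2 * j) ^ 2 + m.choose 2 := by
  have hchoose : m.choose 2 * 2 = m ^ 2 - m := by
    rw [Nat.choose_two_right, Nat.div_mul_cancel (Nat.even_mul_pred_self m).two_dvd,
      Nat.mul_sub_one, sq]
  have hm : m ≤ m ^ 2 := Nat.le_self_pow two_ne_zero m
  have hsq : (m + 2 * j) ^ 2 = m ^ 2 + 4 * m * j + 4 * j ^ 2 := by ring
  omega

lemma qFac_succ (q : ℂ) (n : ℕ) : qFac q (n + 1) = qFac q n * (1 - q ^ (n + 1)) :=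
  prod_range_succ _ _

lemma one_sub_pow_succ_ne_zero {q : ℂ} (hq : ¬IsOfFinOrder q) (n : ℕ) : 1 - q ^ (n + 1) ≠ 0 :=
  sub_ne_zero.2 fun h => hq <| isOfFinOrder_iff_pow_eq_one.2 ⟨n + 1, n.succ_pos, h.symm⟩

lemma qFac_ne_zero {q : ℂ} (hq : ¬IsOfFinOrder q) (n : ℕ) : qFac q n ≠ 0 :=
  prod_ne_zero_iff.2 fun i _ => one_sub_pow_succ_ne_zero hq i

lemma not_isOfFinOrder_of_norm_lt_one {q : ℂ} (hq : ‖q‖ < 1) : ¬IsOfFinOrder q := by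
  intro h
  obtain ⟨n, hn, hqn⟩ := isOfFinOrder_iff_pow_eq_one.1 h
  have := congrArg norm hqn
  rw [norm_pow, norm_one, pow_eq_one_iff_of_nonneg (norm_nonneg q) hn.ne'] at this
  exact hq.ne this

lemma pow_le_norm_qFac {q : ℂ} (hq : ‖q‖ ≤ 1) (n : ℕ) : (1 - ‖q‖) ^ n ≤ ‖qFac q n‖ := by
  calc (1 - ‖q‖) ^ n = ∏ _i ∈ range n, (1 - ‖q‖) := by rw [prod_const, card_range]
    _ ≤ ∏ i ∈ range n, ‖1 - q ^ (i + 1)‖ := by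
      refine prod_le_prod (fun _ _ => sub_nonneg.2 hq) fun i _ => ?_
      calc 1 - ‖q‖ ≤ ‖(1 : ℂ)‖ - ‖q ^ (i + 1)‖ := by
            rw [norm_one, norm_pow]
            exact sub_le_sub_left (pow_le_of_le_one (norm_nonneg q) hq i.succ_ne_zero) 1
        _ ≤ ‖1 - q ^ (i + 1)‖ := norm_sub_norm_le _ _
    _ = ‖qFac q n‖ := (norm_prod _ _).symm

/-- `E_q(z)`, the expansion of `(-z;q)_∞`. -/
noncomputable def bigQExp (q : ℂ) : ℂ⟦X⟧ := mk fun n => q ^ n.choose 2 / qFac q n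

/-- `e_q(z)`, the expansion of `1 / (z;q)_∞`. -/
noncomputable def qExp (q : ℂ) : ℂ⟦X⟧ := mk fun n => 1 / qFac q n

/-- `e_{q²}(z²)`, the expansion of `1 / (z²;q²)_∞`. -/
noncomputable def qExpSq (q : ℂ) : ℂ⟦X⟧ :=
  mk fun n => if Even n then 1 / qFac (q ^ 2) (n / 2) else 0

lemma bigQExp_eq_one_add_X_mul_rescale {q : ℂ} (hq : ¬IsOfFinOrder q) :
    bigQExp q = (1 + X) * rescale q (bigQExp q) := by
  ext (_ | n)
  · simp [bigQExp, qFac, coeff_mul]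
  · have := one_sub_pow_succ_ne_zero hq n
    have := qFac_ne_zero hq n
    simp only [bigQExp, add_mul, one_mul, map_add, coeff_succ_X_mul, coeff_rescale, coeff_mk,
      Nat.choose_succ_succ', Nat.choose_one_right, qFac_succ]
    field_simp
    ring

lemma coeff_qExpSq_two_mul (q : ℂ) (j : ℕ) : coeff (2 * j) (qExpSq q) = 1 / qFac (q ^ 2) j := by
  simp [qExpSq]

lemma coeff_qExpSq_two_mul_add_one (q : ℂ) (j : ℕ) : coeff (2 * j + 1) (qExpSq q) = 0 := by
  simp [qExpSq]

lemma qExpSq_mul_one_sub_X_sq {q : ℂ} (hq : ¬IsOfFinOrder q) :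
    qExpSq q * (1 - X ^ 2) = rescale q (qExpSq q) := by
  have hq2 : ¬IsOfFinOrder (q ^ 2) := by simpa [isOfFinOrder_pow] using hq
  ext n
  rw [mul_sub, mul_one, mul_comm, map_sub, coeff_X_pow_mul', coeff_rescale]
  obtain ⟨j, rfl | rfl⟩ := Nat.even_or_odd' n
  · cases j with
    | zero => simp
    | succ j =>
      have := one_sub_pow_succ_ne_zero hq2 j
      have := qFac_ne_zero hq2 j
      rw [if_pos (by omega), show 2 * (j + 1) - 2 = 2 * j by omega, coeff_qExpSq_two_mul,
        coeff_qExpSq_two_mul, qFac_succ]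
      field_simp
      ring
  · cases j with
    | zero => simp [show coeff 1 (qExpSq q) = 0 from coeff_qExpSq_two_mul_add_one q 0]
    | succ j =>
      rw [if_pos (by omega), show 2 * (j + 1) + 1 - 2 = 2 * j + 1 by omega,
        coeff_qExpSq_two_mul_add_one, coeff_qExpSq_two_mul_add_one]
      ring

lemma coeff_qExp_succ_mul {q : ℂ} (hq : ¬IsOfFinOrder q) (n : ℕ) :
    coeff (n + 1) (qExp q) * (1 - q ^ (n + 1)) = coeff n (qExp q) := by
  have := one_sub_pow_succ_ne_zero hq n
  have := qFac_ne_zero hq n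
  simp only [qExp, coeff_mk, qFac_succ]
  field_simp

lemma eq_qExp_of_mul_one_sub_X_eq_rescale {q : ℂ} (hq : ¬IsOfFinOrder q) {f : ℂ⟦X⟧}
    (hf : f * (1 - X) = rescale q f) (h0 : constantCoeff f = 1) : f = qExp q := by
  ext n
  induction n with
  | zero => simpa [qExp, qFac] using h0
  | succ n ih =>
    have hcoeff := congrArg (coeff (n + 1)) hf
    rw [mul_sub, mul_one, map_sub, mul_comm, coeff_succ_X_mul, coeff_rescale, ih] at hcoeff
    refine mul_right_cancel₀ (one_sub_pow_succ_ne_zero hq n) ?_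
    rw [coeff_qExp_succ_mul hq]
    linear_combination hcoeff

lemma bigQExp_mul_qExpSq {q : ℂ} (hq : ¬IsOfFinOrder q) : bigQExp q * qExpSq q = qExp q := by
  refine eq_qExp_of_mul_one_sub_X_eq_rescale hq ?_ ?_
  · calc bigQExp q * qExpSq q * (1 - X)
        = (1 + X) * rescale q (bigQExp q) * qExpSq q * (1 - X) := by
          rw [← bigQExp_eq_one_add_X_mul_rescale hq]
      _ = rescale q (bigQExp q) * (qExpSq q * (1 - X ^ 2)) := by ring
      _ = rescale q (bigQExp q * qExpSq q) := by rw [qExpSq_mul_one_sub_X_sq hq, map_mul]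
  · simp [bigQExp, qExpSq, qFac]

lemma norm_coeff_bigQExp_le {q : ℂ} (hq : ‖q‖ < 1) (n : ℕ) :
    ‖coeff n (bigQExp q)‖ ≤ 1 / (1 - ‖q‖) ^ n := by
  rw [bigQExp, coeff_mk, norm_div, norm_pow]
  have : 0 < 1 - ‖q‖ := sub_pos.2 hq
  exact div_le_div₀ zero_le_one (pow_le_one₀ (norm_nonneg q) hq.le) (by positivity)
    (pow_le_norm_qFac hq.le n)

lemma norm_coeff_qExpSq_le {q : ℂ} (hq : ‖q‖ < 1) (n : ℕ) :
    ‖coeff n (qExpSq q)‖ ≤ 1 / (1 - ‖q‖) ^ n := by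
  have hs : 0 < 1 - ‖q‖ := sub_pos.2 hq
  obtain ⟨j, rfl | rfl⟩ := Nat.even_or_odd' n
  · have hq2 : ‖q ^ 2‖ ≤ ‖q‖ := by
      rw [norm_pow]; exact pow_le_of_le_one (norm_nonneg q) hq.le two_ne_zero
    rw [coeff_qExpSq_two_mul, norm_div, norm_one]
    refine one_div_le_one_div_of_le (by positivity) ?_
    calc (1 - ‖q‖) ^ (2 * j) ≤ (1 - ‖q‖) ^ j :=
          pow_le_pow_of_le_one hs.le (by linarith [norm_nonneg q]) (by omega)
      _ ≤ (1 - ‖q ^ 2‖) ^ j := pow_le_pow_left₀ hs.le (by linarith) j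
      _ ≤ ‖qFac (q ^ 2) j‖ := pow_le_norm_qFac (hq2.trans hq.le) j
  · rw [coeff_qExpSq_two_mul_add_one, norm_zero]
    positivity

theorem double_sum_RR_one (q : ℂ) (hq : ‖q‖ < 1) :
    ∑' n : ℕ × ℕ,
        q ^ ((3 * n.1 ^ 2 - n.1) / 2 + 4 * n.1 * n.2 + 4 * n.2 ^ 2) /
          (qFac q n.1 * qFac (q ^ 2) n.2) =
      ∑' n : ℕ, q ^ (n ^ 2) / qFac q n := by
  -- Indexing by `(m, k) = (m, 2j)` turns the double sum into a Cauchy product.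
  set t : ℕ × ℕ → ℂ := fun p =>
    q ^ ((p.1 + p.2) ^ 2) * (coeff p.1 (bigQExp q) * coeff p.2 (qExpSq q))
  have ht : Summable t := summable_pow_sq_mul_coeff_mul_coeff hq (sub_pos.2 hq)
    (norm_coeff_bigQExp_le hq) (norm_coeff_qExpSq_le hq)
  have hdouble : Function.Injective fun p : ℕ × ℕ => (p.1, 2 * p.2) := fun a b h => by
    simp only [Prod.mk.injEq] at h; ext <;> omega
  have hsupport : Function.support t ⊆ Set.range fun p : ℕ × ℕ => (p.1, 2 * p.2) := by
    rintro ⟨m, k⟩ hmk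
    obtain ⟨j, rfl | rfl⟩ := Nat.even_or_odd' k
    · exact ⟨(m, j), rfl⟩
    · simp [t, coeff_qExpSq_two_mul_add_one] at hmk
  calc _ = ∑' p : ℕ × ℕ, t (p.1, 2 * p.2) := tsum_congr fun ⟨m, j⟩ => by
          simp only [t, pentagonal_add_eq_sq_add_choose_two, pow_add, bigQExp, coeff_mk,
            coeff_qExpSq_two_mul]
          ring
    _ = ∑' p, t p := hdouble.tsum_eq hsupport
    _ = ∑' n, ∑ p ∈ antidiagonal n, t p := ht.tsum_eq_tsum_sum_antidiagonal
    _ = ∑' n, q ^ (n ^ 2) * coeff n (bigQExp q * qExpSq q) := tsum_congr fun n => by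
          rw [coeff_mul, mul_sum]
          exact sum_congr rfl fun p hp => by simp only [t, mem_antidiagonal.1 hp]
    _ = _ := by simp [bigQExp_mul_qExpSq (not_isOfFinOrder_of_norm_lt_one hq), qExp, div_eq_mul_inv]
end
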